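/- arXiv:1011.6559 — 7 statements merged into one kernel-verified Lean document; each statement's English description precedes it below -/
import Mathlib

section
/- In the ordered semigroup Lsc(X, ℕ ∪ {∞}) of lower semicontinuous functions on a topological space X with pointwise order and addition, if U and V are open subsets of X with U ⊆ K ⊆ V for some compact set K, then the characteristic function 1_U is way below 1_V; that is, whenever 1_V ≤ sup_n g_n for an increasing sequence (g_n) in Lsc(X, ℕ ∪ {∞}), there exists n with 1_U ≤ g_n. -/
/-- In `Lsc(X, ℕ ∪ {∞})` with pointwise order, if `U ⊆ K ⊆ V` with `U, V`
open and `K` compact, then `1_U ≪ 1_V`: whenever `1_V ≤ ⨆ n, g n` pointwise for an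
increasing sequence `(g n)` of lower semicontinuous functions, there is `n` with
`1_U ≤ g n` pointwise. -/
theorem stmt2 {X : Type*} [TopologicalSpace X] (U V K : Set X)
    (hU : IsOpen U) (hV : IsOpen V) (hK : IsCompact K) (hUK : U ⊆ K) (hKV : K ⊆ V)
    (g : ℕ → X → ℕ∞) (hg : ∀ n, LowerSemicontinuous (g n)) (hmono : Monotone g)
    (hle : ∀ x, V.indicator 1 x ≤ ⨆ n, g n x) :
    ∃ n, ∀ x, U.indicator 1 x ≤ g n x := by
  -- For each x ∈ K, 1 ≤ ⨆ n, g n x, so some g n x > 0.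
  have key : ∀ x ∈ K, ∃ n, 0 < g n x := by
    intro x hx
    have h1 : (1 : ℕ∞) ≤ ⨆ n, g n x := by
      have := hle x
      rwa [Set.indicator_of_mem (hKV hx)] at this
    by_contra h
    push_neg at h
    simp only [nonpos_iff_eq_zero] at h
    simp [h] at h1
  -- cover K by open sets {x | 0 < g n x}
  have hcov : K ⊆ ⋃ n, {x | 0 < g n x} := by
    intro x hx
    obtain ⟨n, hn⟩ := key x hx
    exact Set.mem_iUnion.2 ⟨n, hn⟩
  obtain ⟨t, ht⟩ := hK.elim_finite_subcover (fun n => {x | 0 < g n x})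
    (fun n => (hg n).isOpen_preimage 0) hcov
  rcases t.eq_empty_or_nonempty with rfl | hne
  · refine ⟨0, fun x => ?_⟩
    by_cases hx : x ∈ U
    · exact absurd (ht (hUK hx)) (by simp)
    · simp [Set.indicator_of_notMem hx]
  · obtain ⟨N, hN⟩ := t.exists_max_image id hne
    refine ⟨N, fun x => ?_⟩
    by_cases hx : x ∈ U
    · rw [Set.indicator_of_mem hx]
      obtain ⟨n, hn, hgn⟩ := (by simpa using ht (hUK hx) : ∃ n ∈ t, 0 < g n x)
      have : 0 < g N x := lt_of_lt_of_le hgn (hmono (hN.2 n hn) x)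
      exact Order.one_le_iff_pos.mpr this
    · simp [Set.indicator_of_notMem hx]
end

section
/- Let μ be a positive integer and let λ_1 ≤ λ_2 ≤ ⋯ ≤ λ_μ and λ'_1 ≤ λ'_2 ≤ ⋯ ≤ λ'_μ be real numbers in [0,1]. Suppose that for some n ≥ 1 and all integers 0 ≤ i ≤ 2^n − 2: |{j : λ_j > (i+1)/2^n}| ≤ |{j : λ'_j > i/2^n}| and |{j : λ'_j > (i+1)/2^n}| ≤ |{j : λ_j > i/2^n}|. Then |λ_i − λ'_i| ≤ 1/2^{n−1} for all 1 ≤ i ≤ μ. -/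
open Finset

lemma key_aux (μ : ℕ) (l l' : Fin μ → ℝ) (hl : Monotone l) (hl' : Monotone l')
    (hl'0 : ∀ i, 0 ≤ l' i) (hl1 : ∀ i, l i ≤ 1)
    (n : ℕ)
    (h1 : ∀ i : ℕ, i ≤ 2^n - 2 →
      (univ.filter (fun j => ((i:ℝ)+1)/2^n < l j)).card ≤
        (univ.filter (fun j => (i:ℝ)/2^n < l' j)).card)
    (i : Fin μ) : l i - l' i ≤ 2/2^n := by
  by_contra h
  push_neg at h
  have h2n : (0:ℝ) < 2^n := by positivity
  have hgap : l' i + 2/2^n < l i := by linarith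
  set k : ℕ := ⌈(2:ℝ)^n * l' i⌉.toNat with hkdef
  have hk0 : (0:ℤ) ≤ ⌈(2:ℝ)^n * l' i⌉ := Int.ceil_nonneg (mul_nonneg (by positivity) (hl'0 i))
  have hkcast : (k:ℝ) = (⌈(2:ℝ)^n * l' i⌉ : ℝ) := by
    have := Int.toNat_of_nonneg hk0
    rw [hkdef]
    exact_mod_cast congrArg (Int.cast : ℤ → ℝ) this
  have hceil_ge : (2:ℝ)^n * l' i ≤ (k:ℝ) := by
    rw [hkcast]; exact Int.le_ceil _
  have hceil_lt : (k:ℝ) < (2:ℝ)^n * l' i + 1 := by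
    rw [hkcast]; exact Int.ceil_lt_add_one _
  have hl'k : l' i ≤ (k:ℝ)/2^n := by
    rw [le_div_iff₀ h2n]; linarith
  have hklt : ((k:ℝ)+1)/2^n < l i := by
    rw [div_lt_iff₀ h2n]
    have : (2:ℝ)^n * (l' i + 2/2^n) < 2^n * l i := by
      exact (mul_lt_mul_iff_right₀ h2n).mpr hgap
    have h2 : (2:ℝ)^n * (2/2^n) = 2 := by field_simp
    nlinarith
  have hkle : k ≤ 2^n - 2 := by
    have h1r : ((k:ℝ)+1) < 2^n * l i := by
      rw [div_lt_iff₀ h2n] at hklt; linarith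
    have : ((k:ℝ)+1) < 2^n := by nlinarith [hl1 i]
    have hnat : k + 1 < 2^n := by exact_mod_cast this
    omega
  have hcard := h1 k hkle
  have hsub1 : Finset.Ici i ⊆ univ.filter (fun j => ((k:ℝ)+1)/2^n < l j) := by
    intro j hj
    exact mem_filter.mpr ⟨mem_univ _, lt_of_lt_of_le hklt (hl (mem_Ici.mp hj))⟩
  have hsub2 : univ.filter (fun j => (k:ℝ)/2^n < l' j) ⊆ Finset.Ioi i := by
    intro j hj
    have hj' := (mem_filter.mp hj).2
    rw [mem_Ioi]
    by_contra hle
    push_neg at hle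
    exact absurd (le_trans (hl' hle) hl'k) (not_le.mpr hj')
  have c1 : μ - (i:ℕ) ≤ (univ.filter (fun j => ((k:ℝ)+1)/2^n < l j)).card := by
    calc μ - (i:ℕ) = (Finset.Ici i).card := (Fin.card_Ici i).symm
    _ ≤ _ := card_le_card hsub1
  have c2 : (univ.filter (fun j => (k:ℝ)/2^n < l' j)).card ≤ μ - 1 - (i:ℕ) := by
    calc _ ≤ (Finset.Ioi i).card := card_le_card hsub2
    _ = μ - 1 - (i:ℕ) := Fin.card_Ioi i
  have := i.isLt
  omega

open Finset in
/-- the eigenvalue-counting estimate.  Here `l, l' : Fin μ → ℝ` are the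
increasingly ordered tuples `λ, λ'` with values in `[0,1]`. -/
theorem stmt4 (μ : ℕ) (hμ : 0 < μ) (l l' : Fin μ → ℝ)
    (hl : Monotone l) (hl' : Monotone l')
    (hl01 : ∀ i, l i ∈ Set.Icc (0:ℝ) 1) (hl'01 : ∀ i, l' i ∈ Set.Icc (0:ℝ) 1)
    (n : ℕ) (hn : 1 ≤ n)
    (h1 : ∀ i : ℕ, i ≤ 2^n - 2 →
      (univ.filter (fun j => ((i:ℝ)+1)/2^n < l j)).card ≤
        (univ.filter (fun j => (i:ℝ)/2^n < l' j)).card)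
    (h2 : ∀ i : ℕ, i ≤ 2^n - 2 →
      (univ.filter (fun j => ((i:ℝ)+1)/2^n < l' j)).card ≤
        (univ.filter (fun j => (i:ℝ)/2^n < l j)).card) :
    ∀ i : Fin μ, |l i - l' i| ≤ 1/2^(n-1) := by
  intro i
  have ha := key_aux μ l l' hl hl' (fun j => (hl'01 j).1) (fun j => (hl01 j).2) n h1 i
  have hb := key_aux μ l' l hl' hl (fun j => (hl01 j).1) (fun j => (hl'01 j).2) n h2 i
  have hpow : (2:ℝ)^n = 2 * 2^(n-1) := by
    rw [← pow_succ']
    congr 1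
    omega
  have heq : (2:ℝ)/2^n = 1/2^(n-1) := by
    rw [hpow]
    have : (0:ℝ) < 2^(n-1) := by positivity
    field_simp
  rw [abs_sub_le_iff]
  constructor <;> linarith [heq ▸ ha, heq ▸ hb]
end

section
/- Let X be a set and let (U_F) be the family of subsets of Mor × Mor indexed by finite subsets F of a preordered set S with a transitive relation ≪, where Mor is a set of maps S → T into a preordered set T, and U_F = {(α,β) : for all a,b ∈ F with a ≪ b, α(a) ≤ β(b) and β(a) ≤ α(b)}. Then U_{F∪G} ⊆ U_F ∩ U_G, U_F⁻¹ = U_F, and if F' ⊇ F is a finite set such that for all a,b ∈ F with a ≪ b there is c ∈ F' with a ≪ c ≪ b, then U_{F'} ∘ U_{F'} ⊆ U_F. Consequently the sets U_F generate a uniform structure on Mor. -/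
/-- the sets `U F` (indexed by finite subsets `F` of `S`) on the set of
order-preserving maps `S → T` satisfy `U (F ∪ G) ⊆ U F ∩ U G`, `(U F)⁻¹ = U F`, and
`U F' ∘ U F' ⊆ U F` whenever `F' ⊇ F` interpolates `≪` on `F`; hence they generate a
uniform structure. -/
theorem stmt6 {S T : Type*} [Preorder S] [Preorder T] [DecidableEq S]
    (r : S → S → Prop) (hr : Transitive r)
    (U : Finset S → Set ({f : S → T // Monotone f} × {f : S → T // Monotone f}))
    (hU : ∀ F, U F =
      {p | ∀ a ∈ F, ∀ b ∈ F, r a b → p.1.1 a ≤ p.2.1 b ∧ p.2.1 a ≤ p.1.1 b}) :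
    (∀ F G, U (F ∪ G) ⊆ U F ∩ U G) ∧
    (∀ F, {p | (p.2, p.1) ∈ U F} = U F) ∧
    (∀ F F' : Finset S, F ⊆ F' →
      (∀ a ∈ F, ∀ b ∈ F, r a b → ∃ c ∈ F', r a c ∧ r c b) →
      {p | ∃ q, (p.1, q) ∈ U F' ∧ (q, p.2) ∈ U F'} ⊆ U F) := by
  simp only [hU]
  refine ⟨?_, ?_, ?_⟩
  · intro F G p hp
    constructor
    · intro a ha b hb hab
      exact hp a (Finset.mem_union_left _ ha) b (Finset.mem_union_left _ hb) hab
    · intro a ha b hb hab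
      exact hp a (Finset.mem_union_right _ ha) b (Finset.mem_union_right _ hb) hab
  · intro F
    ext p
    constructor
    · intro hp a ha b hb hab
      exact (hp a ha b hb hab).symm
    · intro hp a ha b hb hab
      exact (hp a ha b hb hab).symm
  · rintro F F' hFF' hint p ⟨q, h1, h2⟩ a ha b hb hab
    obtain ⟨c, hc, hac, hcb⟩ := hint a ha b hb hab
    constructor
    · exact le_trans (h1 a (hFF' ha) c hc hac).1 (h2 c hc b (hFF' hb) hcb).1
    · exact le_trans (h2 a (hFF' ha) c hc hac).2 (h1 c hc b (hFF' hb) hcb).2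
end

section
/- Let S be an ordered commutative monoid in which every increasing sequence has a supremum, and suppose every element of S is the supremum of a rapidly increasing sequence (i.e., for every y ∈ S there is a sequence y_1 ≪ y_2 ≪ ⋯ with supremum y). Then for any x, y ∈ S with x ≪ y there exists z ∈ S with x ≪ z ≪ y. -/
open OmegaCompletePartialOrder

/-- The sequential way-below relation: `x ≪ y` iff for every increasing sequence (chain)
`c` with `y ≤ sup c` there is `n` with `x ≤ c n`. -/
def seqWayBelow {A : Type*} [OmegaCompletePartialOrder A] (x y : A) : Prop :=
  ∀ c : Chain A, y ≤ ωSup c → ∃ n, x ≤ c n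

/-- in an ordered commutative monoid with suprema of increasing sequences in
which every element is the supremum of a rapidly increasing sequence, `x ≪ y` implies
there is `z` with `x ≪ z ≪ y`. -/
theorem stmt7 {S : Type*} [OmegaCompletePartialOrder S] [AddCommMonoid S]
    (hrap : ∀ y : S, ∃ c : Chain S,
      (∀ n, seqWayBelow (c n) (c (n+1))) ∧ ωSup c = y)
    (x y : S) (hxy : seqWayBelow x y) :
    ∃ z, seqWayBelow x z ∧ seqWayBelow z y := by
  obtain ⟨c, hc, hsup⟩ := hrap y
  obtain ⟨n, hn⟩ := hxy c hsup.ge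
  refine ⟨c (n+1), ?_, ?_⟩
  · intro d hd
    obtain ⟨m, hm⟩ := hc n d hd
    exact ⟨m, hn.trans hm⟩
  · intro d hd
    exact hc (n+1) d ((le_ωSup c (n+2)).trans (hsup ▸ hd))
end

section
/- In the setting of the previous inductive limit, if x, y ∈ S_i are compact elements with α_{i,∞}(x) = α_{i,∞}(y), then there exists j ≥ i such that α_{i,j}(x) = α_{i,j}(y). -/
open OmegaCompletePartialOrder

/-- in an inductive limit `(L, αinf)` of a sequence `(S i, α)` of ordered
monoids satisfying properties (a) and (b), if `x, y ∈ S i` are compact with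
`αinf i x = αinf i y`, then `α i j x = α i j y` for some `j ≥ i`. -/
theorem stmt9 (S : ℕ → Type*) [∀ i, OmegaCompletePartialOrder (S i)]
    (L : Type*) [OmegaCompletePartialOrder L]
    (α : ∀ i j, i ≤ j → S i → S j) (αinf : ∀ i, S i → L)
    (hmono : ∀ i j (h : i ≤ j), Monotone (α i j h))
    (hmono' : ∀ i, Monotone (αinf i))
    (htrans : ∀ i j k (hij : i ≤ j) (hjk : j ≤ k) (x : S i),
      α j k hjk (α i j hij x) = α i k (hij.trans hjk) x)
    (hcompat : ∀ i j (h : i ≤ j) (x : S i), αinf j (α i j h x) = αinf i x)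
    (ha : ∀ z : L, ∃ x : ∀ i, S i,
      (∀ i, α i (i+1) (Nat.le_succ i) (x i) ≤ x (i+1)) ∧
      IsLUB (Set.range fun i => αinf i (x i)) z)
    (hb : ∀ i (x y : S i), αinf i x ≤ αinf i y → ∀ x' : S i, seqWayBelow x' x →
      ∃ j, ∃ h : i ≤ j, α i j h x' ≤ α i j h y) :
    ∀ i (x y : S i), seqWayBelow x x → seqWayBelow y y → αinf i x = αinf i y →
      ∃ j, ∃ h : i ≤ j, α i j h x = α i j h y := by
  intro i x y hx hy hxy
  obtain ⟨j₁, h₁, hle₁⟩ := hb i x y hxy.le x hx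
  obtain ⟨j₂, h₂, hle₂⟩ := hb i y x hxy.ge y hy
  refine ⟨max j₁ j₂, h₁.trans (le_max_left _ _), le_antisymm ?_ ?_⟩
  · calc α i (max j₁ j₂) _ x
        = α j₁ (max j₁ j₂) (le_max_left _ _) (α i j₁ h₁ x) := (htrans ..).symm
      _ ≤ α j₁ (max j₁ j₂) (le_max_left _ _) (α i j₁ h₁ y) := hmono _ _ _ hle₁
      _ = _ := htrans ..
  · calc α i (max j₁ j₂) _ y
        = α j₂ (max j₁ j₂) (le_max_right _ _) (α i j₂ h₂ y) := (htrans ..).symm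
      _ ≤ α j₂ (max j₁ j₂) (le_max_right _ _) (α i j₂ h₂ x) := hmono _ _ _ hle₂
      _ = _ := htrans ..
end

section
/- Let S, T be ordered commutative monoids with sequential suprema, and let α, β, γ : S → T be order-preserving maps. Let F' be a finite subset of S such that for all a, b in a finite set F ⊆ F' with a ≪ b there exist z₁, z₂, z₃ ∈ F' with a ≪ z₁ ≪ z₂ ≪ z₃ ≪ b. If (α, β) ∈ U_{F'} and (β, γ) ∈ U_{F'} then (α, γ) ∈ U_F, where U_G = {(φ,ψ) : ∀ a,b ∈ G, a ≪ b ⟹ φ(a) ≤ ψ(b) and ψ(a) ≤ φ(b)}. -/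
/-- the composition (triangle inequality) law for the entourages `U F` on
the set of order-preserving maps between ordered commutative monoids.  Here `r` denotes
the way-below relation `≪`, transitive and compatible with `≤`. -/
theorem stmt15 {S T : Type*} [AddCommMonoid S] [PartialOrder S] [IsOrderedAddMonoid S]
    [AddCommMonoid T] [PartialOrder T] [IsOrderedAddMonoid T]
    (r : S → S → Prop) (hr : Transitive r)
    (hr1 : ∀ a b c : S, r a b → b ≤ c → r a c)
    (hr2 : ∀ a b c : S, a ≤ b → r b c → r a c)
    (hrle : ∀ a b : S, r a b → a ≤ b)
    (α β γ : S → T) (hα : Monotone α) (hβ : Monotone β) (hγ : Monotone γ)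
    (F F' : Finset S) (hFF' : F ⊆ F')
    (hinterp : ∀ a ∈ F, ∀ b ∈ F, r a b → ∃ z₁ ∈ F', ∃ z₂ ∈ F', ∃ z₃ ∈ F',
      r a z₁ ∧ r z₁ z₂ ∧ r z₂ z₃ ∧ r z₃ b)
    (hαβ : ∀ a ∈ F', ∀ b ∈ F', r a b → α a ≤ β b ∧ β a ≤ α b)
    (hβγ : ∀ a ∈ F', ∀ b ∈ F', r a b → β a ≤ γ b ∧ γ a ≤ β b) :
    ∀ a ∈ F, ∀ b ∈ F, r a b → α a ≤ γ b ∧ γ a ≤ α b := by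
  intro a ha b hb hab
  obtain ⟨z₁, hz₁, z₂, hz₂, z₃, hz₃, h1, h2, h3, h4⟩ := hinterp a ha b hb hab
  have hz₂b : z₂ ≤ b := hrle _ _ (hr h3 h4)
  constructor
  · exact le_trans (hαβ a (hFF' ha) z₁ hz₁ h1).1
      (le_trans (hβγ z₁ hz₁ z₂ hz₂ h2).1 (hγ hz₂b))
  · exact le_trans (hβγ a (hFF' ha) z₁ hz₁ h1).2
      (le_trans (hαβ z₁ hz₁ z₂ hz₂ h2).2 (hα hz₂b))
end

section
/- Let f ∈ Lsc(Y, ℕ ∪ {∞}) where Y = {0_1,…,0_r} ∪ (0,1) ∪ {1_1,…,1_s} carries the topology generated by the sets (t,1) ∪ {1_j} and {0_i} ∪ (0,t) for t ∈ (0,1). If f satisfies lim_{t→0} f(t) ≥ Σ_{i=1}^r f(0_i) and lim_{t→1} f(t) ≥ Σ_{j=1}^s f(1_j) (limits along (0,1), and the limits exist in ℕ ∪ {∞} as liminf), then f can be written as a countable pointwise sum of characteristic functions of open subsets V_n of Y of the form {t_n} ∪ U_n ∪ {t'_n}, where U_n ⊆ (0,1) are open with U_n ⊇ U_{n+1}, t_n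 ∈ {0_1,…,0_r} occurs with multiplicity f(0_i) for each i, and t'_n ∈ {1_1,…,1_s} occurs with multiplicity f(1_j) for each j. -/
open Filter Topology

/-- The underlying set of the non-Hausdorff spectrum
`Y = {0_1,…,0_r} ∪ (0,1) ∪ {1_1,…,1_s}`. -/
abbrev SpecPoint (r s : ℕ) : Type := Fin r ⊕ (↥(Set.Ioo (0:ℝ) 1) ⊕ Fin s)

/-- The inclusion of the open interval `(0,1)` into `Y`. -/
def specMid {r s : ℕ} (u : ↥(Set.Ioo (0:ℝ) 1)) : SpecPoint r s := Sum.inr (Sum.inl u)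

/-- The point `0_i` of `Y`. -/
def spec0 {r s : ℕ} (i : Fin r) : SpecPoint r s := Sum.inl i

/-- The point `1_j` of `Y`. -/
def spec1 {r s : ℕ} (j : Fin s) : SpecPoint r s := Sum.inr (Sum.inr j)

/-- The topology on `Y` generated by the sets `(t,1) ∪ {1_j}` and `{0_i} ∪ (0,t)`,
`t ∈ (0,1)`. -/
noncomputable def specTopology (r s : ℕ) : TopologicalSpace (SpecPoint r s) :=
  TopologicalSpace.generateFrom
    ({A | ∃ t : ↥(Set.Ioo (0:ℝ) 1), ∃ j : Fin s,
        A = {spec1 j} ∪ specMid '' {u : ↥(Set.Ioo (0:ℝ) 1) | (t:ℝ) < (u:ℝ)}} ∪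
     {A | ∃ t : ↥(Set.Ioo (0:ℝ) 1), ∃ i : Fin r,
        A = {spec0 i} ∪ specMid '' {u : ↥(Set.Ioo (0:ℝ) 1) | (u:ℝ) < (t:ℝ)}})

section AuxStmt18
open Set TopologicalSpace


lemma aux_enat_eq_top (a : ℕ∞) (h : ∀ n : ℕ, (n:ℕ∞) ≤ a) : a = ⊤ := by
  cases a with
  | top => rfl
  | coe k => exact absurd (h (k+1)) (by exact_mod_cast Nat.not_succ_le_self k)

lemma aux_encard_lt (a : ℕ∞) : {n : ℕ | (n:ℕ∞) < a}.encard = a := by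
  cases a with
  | top =>
      rw [Set.encard_eq_top_iff]
      have : {n : ℕ | (n:ℕ∞) < ⊤} = Set.univ := by
        ext n; simp [WithTop.coe_lt_top]
      rw [this]
      exact Set.infinite_univ
  | coe k =>
      have : {n : ℕ | (n:ℕ∞) < (k:ℕ∞)} = ↑(Finset.range k) := by
        ext n; simp [Nat.cast_lt]
      rw [this, Set.encard_coe_eq_coe_finsetCard, Finset.card_range]

lemma aux_count_sup (P : ℕ → Prop) [DecidablePred P] :
    (⨆ N : ℕ, ∑ n ∈ Finset.range N, (if P n then (1:ℕ∞) else 0)) = {n | P n}.encard := by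
  have hsum : ∀ N : ℕ, (∑ n ∈ Finset.range N, (if P n then (1:ℕ∞) else 0))
      = (((Finset.range N).filter P).card : ℕ∞) := fun N => Finset.sum_boole P _
  apply le_antisymm
  · refine iSup_le fun N => ?_
    rw [hsum, ← Set.encard_coe_eq_coe_finsetCard]
    apply Set.encard_mono
    intro n hn
    simp only [Finset.coe_filter, Set.mem_setOf_eq] at hn ⊢
    exact hn.2
  · by_cases hfin : {n | P n}.Finite
    · obtain ⟨m, hm⟩ := hfin.bddAbove
      have hsub : hfin.toFinset ⊆ (Finset.range (m+1)).filter P := by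
        intro n hn
        rw [Set.Finite.mem_toFinset] at hn
        refine Finset.mem_filter.2 ⟨Finset.mem_range.2 ?_, hn⟩
        exact Nat.lt_succ_of_le (hm hn)
      calc {n | P n}.encard = (hfin.toFinset.card : ℕ∞) := hfin.encard_eq_coe_toFinset_card
        _ ≤ (((Finset.range (m+1)).filter P).card : ℕ∞) := by
            exact_mod_cast Finset.card_le_card hsub
        _ ≤ _ := by rw [← hsum]
                    exact le_iSup (fun N => ∑ n ∈ Finset.range N, (if P n then (1:ℕ∞) else 0)) (m+1)
    · rw [Set.encard_eq_top_iff.2 hfin]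
      rw [top_le_iff]
      apply aux_enat_eq_top
      intro k
      obtain ⟨t, hts, htc⟩ := Set.Infinite.exists_subset_card_eq hfin k
      set N : ℕ := (t.sup id) + 1 with hN
      have hsub : t ⊆ (Finset.range N).filter P := by
        intro n hn
        refine Finset.mem_filter.2 ⟨Finset.mem_range.2 ?_, hts hn⟩
        exact Nat.lt_succ_of_le (Finset.le_sup (f := id) hn)
      calc (k:ℕ∞) = (t.card : ℕ∞) := by rw [htc]
        _ ≤ (((Finset.range N).filter P).card : ℕ∞) := by exact_mod_cast Finset.card_le_card hsub
        _ ≤ _ := by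
              rw [← hsum]
              exact le_iSup (fun N => ∑ n ∈ Finset.range N, (if P n then (1:ℕ∞) else 0)) N

lemma aux_encard_biUnion {ι α : Type*} (s : Finset ι) (A : ι → Set α)
    (hd : ∀ i ∈ s, ∀ j ∈ s, i ≠ j → Disjoint (A i) (A j)) :
    (⋃ i ∈ s, A i).encard = ∑ i ∈ s, (A i).encard := by
  classical
  induction s using Finset.induction with
  | empty => simp
  | @insert a s ha ih =>
      rw [Finset.sum_insert ha, Finset.set_biUnion_insert, Set.encard_union_eq, ih]
      · intro i hi j hj hij
        exact hd i (Finset.mem_insert_of_mem hi) j (Finset.mem_insert_of_mem hj) hij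
      · rw [Set.disjoint_iUnion_right]
        intro i
        rw [Set.disjoint_iUnion_right]
        intro hi
        exact hd a (Finset.mem_insert_self a s) i (Finset.mem_insert_of_mem hi)
          (by rintro rfl; exact ha hi)

lemma aux_equiv_of_encard {α β : Type*} [Countable α] [Countable β] (A : Set α) (B : Set β)
    (h : A.encard = B.encard) : Nonempty (A ≃ B) := by
  by_cases hA : A.Finite
  · have hB : B.Finite := by
      rw [← Set.encard_ne_top_iff] at hA ⊢
      rwa [← h]
    haveI := hA.fintype
    haveI := hB.fintype
    rw [hA.encard_eq_coe_toFinset_card, hB.encard_eq_coe_toFinset_card] at h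
    have h' : Fintype.card ↥A = Fintype.card ↥B := by
      have := Nat.cast_injective (R := ℕ∞) h
      rwa [Set.Finite.card_toFinset, Set.Finite.card_toFinset] at this
    exact ⟨Fintype.equivOfCardEq h'⟩
  · have hB : B.Infinite := by
      rw [← Set.encard_eq_top_iff, ← h, Set.encard_eq_top_iff]
      exact hA
    haveI : Infinite A := Set.infinite_coe_iff.2 hA
    haveI : Infinite B := Set.infinite_coe_iff.2 hB
    obtain ⟨dA⟩ := nonempty_denumerable (↥A)
    obtain ⟨dB⟩ := nonempty_denumerable (↥B)
    exact ⟨(dA.eqv _).trans (dB.eqv _).symm⟩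
lemma aux_assign (r : ℕ) (c : Fin r → ℕ∞) :
    ∃ t : ℕ → Option (Fin r),
      (∀ i, {n | t n = some i}.encard = c i) ∧
      (∀ n i, t n = some i → (n:ℕ∞) < ∑ i, c i) ∧
      (∀ n : ℕ, (n:ℕ∞) < ∑ i, c i → t n ≠ none) := by
  classical
  set S : ℕ∞ := ∑ i, c i with hS
  set D : Set (Fin r × ℕ) := {x | ((x.2:ℕ∞)) < c x.1} with hD
  have hDcard : D.encard = S := by
    have hunion : D = ⋃ i ∈ Finset.univ, (fun m => ((i, m) : Fin r × ℕ)) '' {m | (m:ℕ∞) < c i} := by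
      ext x
      simp only [Set.mem_iUnion, Set.mem_image, Set.mem_setOf_eq, Finset.mem_univ, exists_true_left,
        exists_prop, true_and, hD]
      constructor
      · intro h
        exact ⟨x.1, x.2, h, rfl⟩
      · rintro ⟨i, m, hm, rfl⟩
        exact hm
    rw [hunion, aux_encard_biUnion]
    · rw [hS]
      apply Finset.sum_congr rfl
      intro i _
      have hinj2 : Set.InjOn (fun m => ((i, m) : Fin r × ℕ)) {m : ℕ | (m:ℕ∞) < c i} :=
        fun a _ b _ hab => by simpa using hab
      rw [hinj2.encard_image]
      exact aux_encard_lt (c i)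
    · intro i _ j _ hij
      rw [Set.disjoint_left]
      rintro x hx1 hx2
      obtain ⟨m, _, rfl⟩ := hx1
      obtain ⟨m', _, hx⟩ := hx2
      exact hij ((congrArg Prod.fst hx).symm)
  have hTcard : {n : ℕ | (n:ℕ∞) < S}.encard = S := aux_encard_lt S
  obtain ⟨e⟩ : Nonempty (↥{n : ℕ | (n:ℕ∞) < S} ≃ ↥D) :=
    aux_equiv_of_encard _ _ (hTcard.trans hDcard.symm)
  refine ⟨fun n => if h : (n:ℕ∞) < S then some ((e ⟨n, h⟩).val.1) else none, ?_, ?_, ?_⟩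
  · intro i
    set F : Set ℕ := {n | (if h : (n:ℕ∞) < S then some ((e ⟨n, h⟩).val.1) else none) = some i}
      with hF
    have hmem : ∀ n, n ∈ F ↔ ∃ h : (n:ℕ∞) < S, ((e ⟨n, h⟩).val.1) = i := by
      intro n
      by_cases h : (n:ℕ∞) < S
      · simp [hF, h]
      · simp [hF, h]
    set φ : ℕ → ℕ := fun n => if h : (n:ℕ∞) < S then (e ⟨n, h⟩).val.2 else 0 with hφ
    have himg : φ '' F = {m : ℕ | (m:ℕ∞) < c i} := by
      ext m
      constructor
      · rintro ⟨n, hn, rfl⟩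
        obtain ⟨h, hi⟩ := (hmem n).1 hn
        have hp := (e ⟨n, h⟩).property
        simp only [hD, Set.mem_setOf_eq] at hp
        rw [hi] at hp
        simpa [hφ, h] using hp
      · intro hm
        have hd : ((i, m) : Fin r × ℕ) ∈ D := by simpa [hD] using hm
        set d : ↥D := ⟨(i, m), hd⟩
        have hn : ((e.symm d : ℕ) : ℕ∞) < S := (e.symm d).property
        refine ⟨(e.symm d : ℕ), ?_, ?_⟩
        · rw [hmem]
          refine ⟨hn, ?_⟩
          have : (⟨(e.symm d : ℕ), hn⟩ : {n : ℕ | (n:ℕ∞) < S}) = e.symm d := rfl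
          rw [this, Equiv.apply_symm_apply]
        · have : (⟨(e.symm d : ℕ), hn⟩ : {n : ℕ | (n:ℕ∞) < S}) = e.symm d := rfl
          simp only [hφ]
          rw [dif_pos hn, this, Equiv.apply_symm_apply]
    have hinj : Set.InjOn φ F := by
      intro n hn n' hn' hnn
      obtain ⟨h, hi⟩ := (hmem n).1 hn
      obtain ⟨h', hi'⟩ := (hmem n').1 hn'
      simp only [hφ] at hnn
      rw [dif_pos h, dif_pos h'] at hnn
      have hval : (e ⟨n, h⟩).val = (e ⟨n', h'⟩).val := by
        apply Prod.ext
        · rw [hi, hi']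
        · exact hnn
      have := e.injective (Subtype.ext hval)
      exact congrArg Subtype.val this
    have := hinj.encard_image
    rw [himg, aux_encard_lt] at this
    exact this.symm
  · intro n i hni
    by_cases h : (n:ℕ∞) < S
    · exact h
    · simp [h] at hni
  · intro n h
    simp [h]

def specGens (r s : ℕ) : Set (Set (SpecPoint r s)) :=
    ({A | ∃ t : ↥(Set.Ioo (0:ℝ) 1), ∃ j : Fin s,
        A = {spec1 j} ∪ specMid '' {u : ↥(Set.Ioo (0:ℝ) 1) | (t:ℝ) < (u:ℝ)}} ∪
     {A | ∃ t : ↥(Set.Ioo (0:ℝ) 1), ∃ i : Fin r,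
        A = {spec0 i} ∪ specMid '' {u : ↥(Set.Ioo (0:ℝ) 1) | (u:ℝ) < (t:ℝ)}})

@[simp] lemma spec0_inj {r s : ℕ} {i i' : Fin r} :
    (spec0 i : SpecPoint r s) = spec0 i' ↔ i = i' := by simp [spec0]
@[simp] lemma spec1_inj {r s : ℕ} {j j' : Fin s} :
    (spec1 j : SpecPoint r s) = spec1 j' ↔ j = j' := by simp [spec1]
@[simp] lemma specMid_inj {r s : ℕ} {u v : ↥(Set.Ioo (0:ℝ) 1)} :
    (specMid u : SpecPoint r s) = specMid v ↔ u = v := by simp [specMid]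
@[simp] lemma spec0_ne_mid {r s : ℕ} {i : Fin r} {u : ↥(Set.Ioo (0:ℝ) 1)} :
    (spec0 i : SpecPoint r s) ≠ specMid u := by simp [spec0, specMid]
@[simp] lemma mid_ne_spec0 {r s : ℕ} {i : Fin r} {u : ↥(Set.Ioo (0:ℝ) 1)} :
    (specMid u : SpecPoint r s) ≠ spec0 i := by simp [spec0, specMid]
@[simp] lemma spec1_ne_mid {r s : ℕ} {j : Fin s} {u : ↥(Set.Ioo (0:ℝ) 1)} :
    (spec1 j : SpecPoint r s) ≠ specMid u := by simp [spec1, specMid]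
@[simp] lemma mid_ne_spec1 {r s : ℕ} {j : Fin s} {u : ↥(Set.Ioo (0:ℝ) 1)} :
    (specMid u : SpecPoint r s) ≠ spec1 j := by simp [spec1, specMid]
@[simp] lemma spec0_ne_spec1 {r s : ℕ} {i : Fin r} {j : Fin s} :
    (spec0 i : SpecPoint r s) ≠ spec1 j := by simp [spec0, spec1]
@[simp] lemma spec1_ne_spec0 {r s : ℕ} {i : Fin r} {j : Fin s} :
    (spec1 j : SpecPoint r s) ≠ spec0 i := by simp [spec0, spec1]
@[simp] lemma spec0_mem_mid_image {r s : ℕ} {i : Fin r} {P : Set ↥(Set.Ioo (0:ℝ) 1)} :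
    (spec0 i : SpecPoint r s) ∈ specMid '' P ↔ False := by
  simp only [Set.mem_image, iff_false]; rintro ⟨v, _, h⟩; exact mid_ne_spec0 h
@[simp] lemma spec1_mem_mid_image {r s : ℕ} {j : Fin s} {P : Set ↥(Set.Ioo (0:ℝ) 1)} :
    (spec1 j : SpecPoint r s) ∈ specMid '' P ↔ False := by
  simp only [Set.mem_image, iff_false]; rintro ⟨v, _, h⟩; exact mid_ne_spec1 h
@[simp] lemma mid_mem_mid_image {r s : ℕ} {u : ↥(Set.Ioo (0:ℝ) 1)} {P : Set ↥(Set.Ioo (0:ℝ) 1)} :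
    (specMid u : SpecPoint r s) ∈ specMid '' P ↔ u ∈ P := by
  constructor
  · rintro ⟨v, hv, h⟩
    rwa [← specMid_inj.1 h]
  · exact fun h => ⟨u, h, rfl⟩

lemma specMid_image_mono {r s : ℕ} {P Q : Set ↥(Set.Ioo (0:ℝ) 1)} (h : P ⊆ Q) :
    (specMid '' P : Set (SpecPoint r s)) ⊆ specMid '' Q := Set.image_mono h

lemma gen1_mem {r s : ℕ} (t : ↥(Set.Ioo (0:ℝ) 1)) (j : Fin s) :
    ({spec1 j} ∪ specMid '' {u : ↥(Set.Ioo (0:ℝ) 1) | (t:ℝ) < (u:ℝ)} : Set (SpecPoint r s))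
      ∈ specGens r s := Or.inl ⟨t, j, rfl⟩
lemma gen0_mem {r s : ℕ} (t : ↥(Set.Ioo (0:ℝ) 1)) (i : Fin r) :
    ({spec0 i} ∪ specMid '' {u : ↥(Set.Ioo (0:ℝ) 1) | (u:ℝ) < (t:ℝ)} : Set (SpecPoint r s))
      ∈ specGens r s := Or.inr ⟨t, i, rfl⟩

lemma open_zeroSet {r s : ℕ} (i : Fin r) (b : ℝ) (hb : 0 < b) :
    GenerateOpen (specGens r s)
      ({spec0 i} ∪ specMid '' {u : ↥(Set.Ioo (0:ℝ) 1) | (u:ℝ) < b}) := by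
  have key : ({spec0 i} ∪ specMid '' {u : ↥(Set.Ioo (0:ℝ) 1) | (u:ℝ) < b} : Set (SpecPoint r s))
      = ⋃₀ {A | ∃ t : ↥(Set.Ioo (0:ℝ) 1), (t:ℝ) ≤ b ∧
          A = {spec0 i} ∪ specMid '' {u : ↥(Set.Ioo (0:ℝ) 1) | (u:ℝ) < (t:ℝ)}} := by
    apply Set.Subset.antisymm
    · rintro y (hy | hy)
      · refine ⟨_, ⟨⟨min b 1 / 2, ?_, ?_⟩, ?_, rfl⟩, Or.inl hy⟩
        · positivity
        · have : min b 1 ≤ 1 := min_le_right _ _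
          linarith
        · show min b 1 / 2 ≤ b
          have : min b 1 ≤ b := min_le_left _ _
          linarith
      · obtain ⟨v, hv, rfl⟩ := hy
        have hv0 : (0:ℝ) < (v:ℝ) := v.2.1
        have hv1 : (v:ℝ) < 1 := v.2.2
        have hvb : (v:ℝ) < b := hv
        refine ⟨_, ⟨⟨((v:ℝ) + min b 1) / 2, ?_, ?_⟩, ?_, rfl⟩, Or.inr ?_⟩
        · have : (0:ℝ) < min b 1 := lt_min hb one_pos
          positivity
        · have h1 : (v:ℝ) < 1 := hv1
          have h2 : min b 1 ≤ 1 := min_le_right _ _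
          have h3 : (v:ℝ) < min b 1 := lt_min hvb hv1
          linarith
        · show ((v:ℝ) + min b 1) / 2 ≤ b
          have h3 : (v:ℝ) < min b 1 := lt_min hvb hv1
          have : min b 1 ≤ b := min_le_left _ _
          linarith
        · refine ⟨v, ?_, rfl⟩
          show (v:ℝ) < ((v:ℝ) + min b 1) / 2
          have h3 : (v:ℝ) < min b 1 := lt_min hvb hv1
          linarith
    · rintro y ⟨A, ⟨t, htb, rfl⟩, hy⟩
      rcases hy with hy | hy
      · exact Or.inl hy
      · obtain ⟨v, hv, rfl⟩ := hy
        exact Or.inr ⟨v, lt_of_lt_of_le hv htb, rfl⟩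
  rw [key]
  apply GenerateOpen.sUnion
  rintro A ⟨t, _, rfl⟩
  exact GenerateOpen.basic _ (gen0_mem t i)

lemma open_oneSet {r s : ℕ} (j : Fin s) (a : ℝ) (ha : a < 1) :
    GenerateOpen (specGens r s)
      ({spec1 j} ∪ specMid '' {u : ↥(Set.Ioo (0:ℝ) 1) | a < (u:ℝ)}) := by
  have key : ({spec1 j} ∪ specMid '' {u : ↥(Set.Ioo (0:ℝ) 1) | a < (u:ℝ)} : Set (SpecPoint r s))
      = ⋃₀ {A | ∃ t : ↥(Set.Ioo (0:ℝ) 1), a ≤ (t:ℝ) ∧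
          A = {spec1 j} ∪ specMid '' {u : ↥(Set.Ioo (0:ℝ) 1) | (t:ℝ) < (u:ℝ)}} := by
    apply Set.Subset.antisymm
    · rintro y (hy | hy)
      · refine ⟨_, ⟨⟨(max a 0 + 1) / 2, ?_, ?_⟩, ?_, rfl⟩, Or.inl hy⟩
        · have : (0:ℝ) ≤ max a 0 := le_max_right _ _
          positivity
        · have : max a 0 < 1 := max_lt ha one_pos
          linarith
        · show a ≤ (max a 0 + 1) / 2
          have h1 : a ≤ max a 0 := le_max_left _ _
          have : max a 0 < 1 := max_lt ha one_pos
          linarith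
      · obtain ⟨v, hv, rfl⟩ := hy
        have hv0 : (0:ℝ) < (v:ℝ) := v.2.1
        have hav : a < (v:ℝ) := hv
        refine ⟨_, ⟨⟨(max a 0 + (v:ℝ)) / 2, ?_, ?_⟩, ?_, rfl⟩, Or.inr ?_⟩
        · have : (0:ℝ) ≤ max a 0 := le_max_right _ _
          positivity
        · have h1 : max a 0 < (v:ℝ) := max_lt hav hv0
          have : (v:ℝ) < 1 := v.2.2
          linarith
        · show a ≤ (max a 0 + (v:ℝ)) / 2
          have h1 : a ≤ max a 0 := le_max_left _ _
          have h2 : max a 0 < (v:ℝ) := max_lt hav hv0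
          linarith
        · refine ⟨v, ?_, rfl⟩
          show (max a 0 + (v:ℝ)) / 2 < (v:ℝ)
          have h2 : max a 0 < (v:ℝ) := max_lt hav hv0
          linarith
    · rintro y ⟨A, ⟨t, hat, rfl⟩, hy⟩
      rcases hy with hy | hy
      · exact Or.inl hy
      · obtain ⟨v, hv, rfl⟩ := hy
        exact Or.inr ⟨v, lt_of_le_of_lt hat hv, rfl⟩
  rw [key]
  apply GenerateOpen.sUnion
  rintro A ⟨t, _, rfl⟩
  exact GenerateOpen.basic _ (gen1_mem t j)

lemma heq_zz {r s : ℕ} (i i' : Fin r) (hii : i ≠ i') (b b' : ℝ) :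
    (({spec0 i} ∪ specMid '' {v : ↥(Set.Ioo (0:ℝ) 1) | (v:ℝ) < b}) : Set (SpecPoint r s)) ∩
      ({spec0 i'} ∪ specMid '' {v : ↥(Set.Ioo (0:ℝ) 1) | (v:ℝ) < b'}) =
      specMid '' {v : ↥(Set.Ioo (0:ℝ) 1) | (0:ℝ) < (v:ℝ) ∧ (v:ℝ) < min b b'} := by
  ext y
  rcases y with i'' | v | j'' <;>
    simp only [spec0, spec1, specMid, Set.mem_inter_iff, Set.mem_union, Set.mem_singleton_iff,
      Set.mem_image, Set.mem_setOf_eq, Sum.inl.injEq, Sum.inr.injEq, lt_min_iff,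
      reduceCtorEq, exists_false, or_false, false_or, false_and, and_false, exists_eq_right,
      iff_false, not_and, Sum.exists, Sum.forall] <;> try tauto
  · rintro rfl rfl
    exact hii rfl
  · exact ⟨fun h => ⟨v.2.1, h⟩, fun h => h.2⟩

lemma heq_oo {r s : ℕ} (j j' : Fin s) (hjj : j ≠ j') (a a' : ℝ) :
    (({spec1 j} ∪ specMid '' {v : ↥(Set.Ioo (0:ℝ) 1) | a < (v:ℝ)}) : Set (SpecPoint r s)) ∩
      ({spec1 j'} ∪ specMid '' {v : ↥(Set.Ioo (0:ℝ) 1) | a' < (v:ℝ)}) =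
      specMid '' {v : ↥(Set.Ioo (0:ℝ) 1) | max a a' < (v:ℝ) ∧ (v:ℝ) < 1} := by
  ext y
  rcases y with i'' | v | j'' <;>
    simp only [spec0, spec1, specMid, Set.mem_inter_iff, Set.mem_union, Set.mem_singleton_iff,
      Set.mem_image, Set.mem_setOf_eq, Sum.inl.injEq, Sum.inr.injEq, max_lt_iff,
      reduceCtorEq, exists_false, or_false, false_or, false_and, and_false, exists_eq_right,
      iff_false, not_and, Sum.exists, Sum.forall] <;> try tauto
  · exact ⟨fun h => ⟨⟨h.1, h.2⟩, v.2.2⟩, fun h => ⟨h.1.1, h.1.2⟩⟩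
  · rintro rfl rfl
    exact hjj rfl

section Nbhd
variable {r s : ℕ}


set_option maxHeartbeats 2000000 in
lemma aux_nbhd {W : Set (SpecPoint r s)} (hW : GenerateOpen (specGens r s) W)
    (u : ↥(Set.Ioo (0:ℝ) 1)) (hu : specMid u ∈ W) :
    (∃ a b : ℝ, a < (u:ℝ) ∧ (u:ℝ) < b ∧
      GenerateOpen (specGens r s) (specMid '' {v : ↥(Set.Ioo (0:ℝ) 1) | a < (v:ℝ) ∧ (v:ℝ) < b}) ∧
      specMid '' {v : ↥(Set.Ioo (0:ℝ) 1) | a < (v:ℝ) ∧ (v:ℝ) < b} ⊆ W) ∨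
    (∃ b : ℝ, ∃ i : Fin r, (u:ℝ) < b ∧
      ({spec0 i} ∪ specMid '' {v : ↥(Set.Ioo (0:ℝ) 1) | (v:ℝ) < b}) ⊆ W) ∨
    (∃ a : ℝ, ∃ j : Fin s, a < (u:ℝ) ∧
      ({spec1 j} ∪ specMid '' {v : ↥(Set.Ioo (0:ℝ) 1) | a < (v:ℝ)}) ⊆ W) ∨
    Set.univ ⊆ W := by
  have hu0 : (0:ℝ) < (u:ℝ) := u.2.1
  have hu1 : (u:ℝ) < 1 := u.2.2
  revert hu
  induction hW with
  | basic A hA =>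
      intro hu
      rcases hA with ⟨t, j, rfl⟩ | ⟨t, i, rfl⟩
      · rcases hu with hu | hu
        · exact absurd (Set.mem_singleton_iff.1 hu) mid_ne_spec1
        · rw [mid_mem_mid_image] at hu
          exact Or.inr (Or.inr (Or.inl ⟨(t:ℝ), j, hu, subset_rfl⟩))
      · rcases hu with hu | hu
        · exact absurd (Set.mem_singleton_iff.1 hu) mid_ne_spec0
        · rw [mid_mem_mid_image] at hu
          exact Or.inr (Or.inl ⟨(t:ℝ), i, hu, subset_rfl⟩)
  | univ =>
      intro _
      exact Or.inr (Or.inr (Or.inr subset_rfl))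
  | inter A B _ _ ihA ihB =>
      intro hu
      rcases ihA hu.1 with ⟨a, b, hau, hub, hoA, hsA⟩ | ⟨b, i, hub, hsA⟩ |
        ⟨a, j, hau, hsA⟩ | hsA
      case inter.inl =>
        rcases ihB hu.2 with ⟨a', b', hau', hub', hoB, hsB⟩ | ⟨b', i', hub', hsB⟩ |
          ⟨a', j', hau', hsB⟩ | hsB
        · -- pure ∩ pure
          have heq : (specMid '' {v : ↥(Set.Ioo (0:ℝ) 1) | a < (v:ℝ) ∧ (v:ℝ) < b} : Set (SpecPoint r s)) ∩
              specMid '' {v : ↥(Set.Ioo (0:ℝ) 1) | a' < (v:ℝ) ∧ (v:ℝ) < b'} =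
              specMid '' {v : ↥(Set.Ioo (0:ℝ) 1) | max a a' < (v:ℝ) ∧ (v:ℝ) < min b b'} := by
            ext y
            rcases y with i' | v | j' <;>
              simp [spec0, spec1, specMid, Set.mem_image, max_lt_iff, lt_min_iff] <;> tauto
          refine Or.inl ⟨max a a', min b b', max_lt hau hau', lt_min hub hub', ?_, ?_⟩
          · rw [← heq]; exact GenerateOpen.inter _ _ hoA hoB
          · refine Set.subset_inter ?_ ?_
            · refine Set.Subset.trans (specMid_image_mono ?_) hsA
              intro v hv
              exact ⟨lt_of_le_of_lt (le_max_left _ _) hv.1,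
                lt_of_lt_of_le hv.2 (min_le_left _ _)⟩
            · refine Set.Subset.trans (specMid_image_mono ?_) hsB
              intro v hv
              exact ⟨lt_of_le_of_lt (le_max_right _ _) hv.1,
                lt_of_lt_of_le hv.2 (min_le_right _ _)⟩
        · -- pure ∩ zero
          refine Or.inl ⟨a, min b b', hau, lt_min hub hub', ?_, ?_⟩
          · have heq : (specMid '' {v : ↥(Set.Ioo (0:ℝ) 1) | a < (v:ℝ) ∧ (v:ℝ) < b} : Set (SpecPoint r s)) ∩
                ({spec0 i'} ∪ specMid '' {v : ↥(Set.Ioo (0:ℝ) 1) | (v:ℝ) < b'}) =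
                specMid '' {v : ↥(Set.Ioo (0:ℝ) 1) | a < (v:ℝ) ∧ (v:ℝ) < min b b'} := by
              ext y
              rcases y with i'' | v | j'' <;>
                simp [spec0, spec1, specMid, Set.mem_image, lt_min_iff] <;> tauto
            rw [← heq]
            exact GenerateOpen.inter _ _ hoA (open_zeroSet i' b' (lt_trans hu0 hub'))
          · refine Set.subset_inter ?_ ?_
            · refine Set.Subset.trans (specMid_image_mono ?_) hsA
              intro v hv
              exact ⟨hv.1, lt_of_lt_of_le hv.2 (min_le_left _ _)⟩
            · refine Set.Subset.trans ?_ hsB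
              refine Set.Subset.trans ?_ Set.subset_union_right
              exact specMid_image_mono (fun v hv => lt_of_lt_of_le hv.2 (min_le_right _ _))
        · -- pure ∩ one
          refine Or.inl ⟨max a a', b, max_lt hau hau', hub, ?_, ?_⟩
          · have heq : (specMid '' {v : ↥(Set.Ioo (0:ℝ) 1) | a < (v:ℝ) ∧ (v:ℝ) < b} : Set (SpecPoint r s)) ∩
                ({spec1 j'} ∪ specMid '' {v : ↥(Set.Ioo (0:ℝ) 1) | a' < (v:ℝ)}) =
                specMid '' {v : ↥(Set.Ioo (0:ℝ) 1) | max a a' < (v:ℝ) ∧ (v:ℝ) < b} := by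
              ext y
              rcases y with i'' | v | j'' <;>
                simp [spec0, spec1, specMid, Set.mem_image, max_lt_iff] <;> tauto
            rw [← heq]
            exact GenerateOpen.inter _ _ hoA (open_oneSet j' a' (lt_trans hau' hu1))
          · refine Set.subset_inter ?_ ?_
            · refine Set.Subset.trans (specMid_image_mono ?_) hsA
              intro v hv
              exact ⟨lt_of_le_of_lt (le_max_left _ _) hv.1, hv.2⟩
            · refine Set.Subset.trans ?_ hsB
              refine Set.Subset.trans ?_ Set.subset_union_right
              exact specMid_image_mono (fun v hv => lt_of_le_of_lt (le_max_right _ _) hv.1)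
        · -- pure ∩ univ
          exact Or.inl ⟨a, b, hau, hub, hoA,
            Set.subset_inter hsA (fun y _ => hsB (Set.mem_univ y))⟩
      case inter.inr.inl =>
        rcases ihB hu.2 with ⟨a', b', hau', hub', hoB, hsB⟩ | ⟨b', i', hub', hsB⟩ |
          ⟨a', j', hau', hsB⟩ | hsB
        · -- zero ∩ pure
          refine Or.inl ⟨a', min b b', hau', lt_min hub hub', ?_, ?_⟩
          · have heq : (({spec0 i} ∪ specMid '' {v : ↥(Set.Ioo (0:ℝ) 1) | (v:ℝ) < b}) : Set (SpecPoint r s)) ∩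
                (specMid '' {v : ↥(Set.Ioo (0:ℝ) 1) | a' < (v:ℝ) ∧ (v:ℝ) < b'}) =
                specMid '' {v : ↥(Set.Ioo (0:ℝ) 1) | a' < (v:ℝ) ∧ (v:ℝ) < min b b'} := by
              ext y
              rcases y with i'' | v | j'' <;>
                simp [spec0, spec1, specMid, Set.mem_image, lt_min_iff] <;> tauto
            rw [← heq]
            exact GenerateOpen.inter _ _ (open_zeroSet i b (lt_trans hu0 hub)) hoB
          · refine Set.subset_inter ?_ ?_
            · refine Set.Subset.trans ?_ hsA
              refine Set.Subset.trans ?_ Set.subset_union_right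
              exact specMid_image_mono (fun v hv => lt_of_lt_of_le hv.2 (min_le_left _ _))
            · refine Set.Subset.trans (specMid_image_mono ?_) hsB
              intro v hv
              exact ⟨hv.1, lt_of_lt_of_le hv.2 (min_le_right _ _)⟩
        · -- zero ∩ zero
          by_cases hii : i = i'
          · subst hii
            refine Or.inr (Or.inl ⟨min b b', i, lt_min hub hub', ?_⟩)
            refine Set.subset_inter ?_ ?_
            · refine Set.Subset.trans ?_ hsA
              refine Set.union_subset_union_right _ (specMid_image_mono ?_)
              intro v hv
              exact lt_of_lt_of_le (show (v:ℝ) < min b b' from hv) (min_le_left b b')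
            · refine Set.Subset.trans ?_ hsB
              refine Set.union_subset_union_right _ (specMid_image_mono ?_)
              intro v hv
              exact lt_of_lt_of_le (show (v:ℝ) < min b b' from hv) (min_le_right b b')
          · refine Or.inl ⟨0, min b b', hu0, lt_min hub hub', ?_, ?_⟩
            · rw [← heq_zz i i' hii b b']
              exact GenerateOpen.inter _ _ (open_zeroSet i b (lt_trans hu0 hub))
                (open_zeroSet i' b' (lt_trans hu0 hub'))
            · refine Set.subset_inter ?_ ?_
              · refine Set.Subset.trans ?_ hsA
                refine Set.Subset.trans ?_ Set.subset_union_right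
                exact specMid_image_mono (fun v hv => lt_of_lt_of_le hv.2 (min_le_left _ _))
              · refine Set.Subset.trans ?_ hsB
                refine Set.Subset.trans ?_ Set.subset_union_right
                exact specMid_image_mono (fun v hv => lt_of_lt_of_le hv.2 (min_le_right _ _))
        · -- zero ∩ one
          refine Or.inl ⟨a', b, hau', hub, ?_, ?_⟩
          · have heq : (({spec0 i} ∪ specMid '' {v : ↥(Set.Ioo (0:ℝ) 1) | (v:ℝ) < b}) : Set (SpecPoint r s)) ∩
                ({spec1 j'} ∪ specMid '' {v : ↥(Set.Ioo (0:ℝ) 1) | a' < (v:ℝ)}) =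
                specMid '' {v : ↥(Set.Ioo (0:ℝ) 1) | a' < (v:ℝ) ∧ (v:ℝ) < b} := by
              ext y
              rcases y with i'' | v | j'' <;>
                simp [spec0, spec1, specMid, Set.mem_image] <;> tauto
            rw [← heq]
            exact GenerateOpen.inter _ _ (open_zeroSet i b (lt_trans hu0 hub))
              (open_oneSet j' a' (lt_trans hau' hu1))
          · refine Set.subset_inter ?_ ?_
            · refine Set.Subset.trans ?_ hsA
              refine Set.Subset.trans ?_ Set.subset_union_right
              exact specMid_image_mono (fun v hv => hv.2)
            · refine Set.Subset.trans ?_ hsB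
              refine Set.Subset.trans ?_ Set.subset_union_right
              exact specMid_image_mono (fun v hv => hv.1)
        · -- zero ∩ univ
          exact Or.inr (Or.inl ⟨b, i, hub,
            Set.subset_inter hsA (fun y _ => hsB (Set.mem_univ y))⟩)
      case inter.inr.inr.inl =>
        rcases ihB hu.2 with ⟨a', b', hau', hub', hoB, hsB⟩ | ⟨b', i', hub', hsB⟩ |
          ⟨a', j', hau', hsB⟩ | hsB
        · -- one ∩ pure
          refine Or.inl ⟨max a a', b', max_lt hau hau', hub', ?_, ?_⟩
          · have heq : (({spec1 j} ∪ specMid '' {v : ↥(Set.Ioo (0:ℝ) 1) | a < (v:ℝ)}) : Set (SpecPoint r s)) ∩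
                (specMid '' {v : ↥(Set.Ioo (0:ℝ) 1) | a' < (v:ℝ) ∧ (v:ℝ) < b'}) =
                specMid '' {v : ↥(Set.Ioo (0:ℝ) 1) | max a a' < (v:ℝ) ∧ (v:ℝ) < b'} := by
              ext y
              rcases y with i'' | v | j'' <;>
                simp [spec0, spec1, specMid, Set.mem_image, max_lt_iff] <;> tauto
            rw [← heq]
            exact GenerateOpen.inter _ _ (open_oneSet j a (lt_trans hau hu1)) hoB
          · refine Set.subset_inter ?_ ?_
            · refine Set.Subset.trans ?_ hsA
              refine Set.Subset.trans ?_ Set.subset_union_right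
              exact specMid_image_mono (fun v hv => lt_of_le_of_lt (le_max_left _ _) hv.1)
            · refine Set.Subset.trans (specMid_image_mono ?_) hsB
              intro v hv
              exact ⟨lt_of_le_of_lt (le_max_right _ _) hv.1, hv.2⟩
        · -- one ∩ zero
          refine Or.inl ⟨a, b', hau, hub', ?_, ?_⟩
          · have heq : (({spec1 j} ∪ specMid '' {v : ↥(Set.Ioo (0:ℝ) 1) | a < (v:ℝ)}) : Set (SpecPoint r s)) ∩
                ({spec0 i'} ∪ specMid '' {v : ↥(Set.Ioo (0:ℝ) 1) | (v:ℝ) < b'}) =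
                specMid '' {v : ↥(Set.Ioo (0:ℝ) 1) | a < (v:ℝ) ∧ (v:ℝ) < b'} := by
              ext y
              rcases y with i'' | v | j'' <;>
                simp [spec0, spec1, specMid, Set.mem_image] <;> tauto
            rw [← heq]
            exact GenerateOpen.inter _ _ (open_oneSet j a (lt_trans hau hu1))
              (open_zeroSet i' b' (lt_trans hu0 hub'))
          · refine Set.subset_inter ?_ ?_
            · refine Set.Subset.trans ?_ hsA
              refine Set.Subset.trans ?_ Set.subset_union_right
              exact specMid_image_mono (fun v hv => hv.1)
            · refine Set.Subset.trans ?_ hsB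
              refine Set.Subset.trans ?_ Set.subset_union_right
              exact specMid_image_mono (fun v hv => hv.2)
        · -- one ∩ one
          by_cases hjj : j = j'
          · subst hjj
            refine Or.inr (Or.inr (Or.inl ⟨max a a', j, max_lt hau hau', ?_⟩))
            refine Set.subset_inter ?_ ?_
            · refine Set.Subset.trans ?_ hsA
              refine Set.union_subset_union_right _ (specMid_image_mono ?_)
              intro v hv
              exact lt_of_le_of_lt (le_max_left a a') (show max a a' < (v:ℝ) from hv)
            · refine Set.Subset.trans ?_ hsB
              refine Set.union_subset_union_right _ (specMid_image_mono ?_)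
              intro v hv
              exact lt_of_le_of_lt (le_max_right a a') (show max a a' < (v:ℝ) from hv)
          · refine Or.inl ⟨max a a', 1, max_lt hau hau', hu1, ?_, ?_⟩
            · rw [← heq_oo j j' hjj a a']
              exact GenerateOpen.inter _ _ (open_oneSet j a (lt_trans hau hu1))
                (open_oneSet j' a' (lt_trans hau' hu1))
            · refine Set.subset_inter ?_ ?_
              · refine Set.Subset.trans ?_ hsA
                refine Set.Subset.trans ?_ Set.subset_union_right
                exact specMid_image_mono (fun v hv => lt_of_le_of_lt (le_max_left _ _) hv.1)
              · refine Set.Subset.trans ?_ hsB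
                refine Set.Subset.trans ?_ Set.subset_union_right
                exact specMid_image_mono (fun v hv => lt_of_le_of_lt (le_max_right _ _) hv.1)
        · -- one ∩ univ
          exact Or.inr (Or.inr (Or.inl ⟨a, j, hau,
            Set.subset_inter hsA (fun y _ => hsB (Set.mem_univ y))⟩))
      case inter.inr.inr.inr =>
        rcases ihB hu.2 with ⟨a', b', hau', hub', hoB, hsB⟩ | ⟨b', i', hub', hsB⟩ |
          ⟨a', j', hau', hsB⟩ | hsB
        · exact Or.inl ⟨a', b', hau', hub', hoB,
            Set.subset_inter (fun y _ => hsA (Set.mem_univ y)) hsB⟩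
        · exact Or.inr (Or.inl ⟨b', i', hub',
            Set.subset_inter (fun y _ => hsA (Set.mem_univ y)) hsB⟩)
        · exact Or.inr (Or.inr (Or.inl ⟨a', j', hau',
            Set.subset_inter (fun y _ => hsA (Set.mem_univ y)) hsB⟩))
        · exact Or.inr (Or.inr (Or.inr
            (Set.subset_inter (fun y _ => hsA (Set.mem_univ y)) hsB)))
  | sUnion S hS ih =>
      intro hu
      obtain ⟨A, hAS, huA⟩ := hu
      rcases ih A hAS huA with ⟨a, b, hau, hub, hoA, hsA⟩ | ⟨b, i, hub, hsA⟩ |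
        ⟨a, j, hau, hsA⟩ | hsA
      · exact Or.inl ⟨a, b, hau, hub, hoA, hsA.trans (Set.subset_sUnion_of_mem hAS)⟩
      · exact Or.inr (Or.inl ⟨b, i, hub, hsA.trans (Set.subset_sUnion_of_mem hAS)⟩)
      · exact Or.inr (Or.inr (Or.inl ⟨a, j, hau, hsA.trans (Set.subset_sUnion_of_mem hAS)⟩))
      · exact Or.inr (Or.inr (Or.inr (hsA.trans (Set.subset_sUnion_of_mem hAS))))

end Nbhd

end AuxStmt18

/-- every `f ∈ Lsc(Y, ℕ ∪ {∞})` with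
`liminf_{t→0} f(t) ≥ Σ_i f(0_i)` and `liminf_{t→1} f(t) ≥ Σ_j f(1_j)` is a countable
pointwise sum of characteristic functions of open sets `V n = {t_n} ∪ U n ∪ {t'_n}`,
with `U n ⊆ (0,1)` open and decreasing, and with each `0_i` (resp. `1_j`) occurring as
`t_n` (resp. `t'_n`) with multiplicity `f(0_i)` (resp. `f(1_j)`); the optional endpoints
`t_n, t'_n` are encoded by `Option`-valued sequences. -/
theorem stmt18 (r s : ℕ) (f : SpecPoint r s → ℕ∞)
    (hlsc : ∀ n : ℕ, IsOpen[specTopology r s] {y | (n : ℕ∞) < f y})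
    (h0 : (∑ i, f (spec0 i)) ≤
      Filter.liminf (fun u => f (specMid u))
        (Filter.comap (fun u : ↥(Set.Ioo (0:ℝ) 1) => (u : ℝ))
          (nhdsWithin 0 (Set.Ioo (0:ℝ) 1))))
    (h1 : (∑ j, f (spec1 j)) ≤
      Filter.liminf (fun u => f (specMid u))
        (Filter.comap (fun u : ↥(Set.Ioo (0:ℝ) 1) => (u : ℝ))
          (nhdsWithin 1 (Set.Ioo (0:ℝ) 1)))) :
    ∃ (U : ℕ → Set ↥(Set.Ioo (0:ℝ) 1)) (t0 : ℕ → Option (Fin r))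
      (t1 : ℕ → Option (Fin s)),
      (∀ n, U (n+1) ⊆ U n) ∧
      (∀ n, IsOpen[specTopology r s]
        (((t0 n).elim ∅ (fun i => {spec0 i}) : Set (SpecPoint r s)) ∪
          specMid '' U n ∪ (t1 n).elim ∅ (fun j => {spec1 j}))) ∧
      (∀ i : Fin r, {n : ℕ | t0 n = some i}.encard = f (spec0 i)) ∧
      (∀ j : Fin s, {n : ℕ | t1 n = some j}.encard = f (spec1 j)) ∧
      (∀ y, f y = ⨆ N : ℕ, ∑ n ∈ Finset.range N,
        (((t0 n).elim ∅ (fun i => {spec0 i}) : Set (SpecPoint r s)) ∪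
          specMid '' U n ∪ (t1 n).elim ∅ (fun j => {spec1 j})).indicator 1 y) := by

  classical
  obtain ⟨t0, ht0card, ht0lt, ht0full⟩ := aux_assign r (fun i => f (spec0 i))
  obtain ⟨t1, ht1card, ht1lt, ht1full⟩ := aux_assign s (fun j => f (spec1 j))
  set U : ℕ → Set ↥(Set.Ioo (0:ℝ) 1) := fun n => {u | (n:ℕ∞) < f (specMid u)} with hU
  have anchor0 : ∀ n : ℕ, (n:ℕ∞) < ∑ i, f (spec0 i) →
      ∃ t : ↥(Set.Ioo (0:ℝ) 1), ∀ v : ↥(Set.Ioo (0:ℝ) 1), (v:ℝ) < (t:ℝ) →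
        (n:ℕ∞) < f (specMid v) := by
    intro n hn
    have hlt := lt_of_lt_of_le hn h0
    have hev := Filter.eventually_lt_of_lt_liminf hlt
    rw [Filter.eventually_comap] at hev
    rw [eventually_nhdsWithin_iff] at hev
    rw [Metric.eventually_nhds_iff] at hev
    obtain ⟨ε, hε, hball⟩ := hev
    refine ⟨⟨min (ε/2) (1/2), ⟨by positivity,
      lt_of_le_of_lt (min_le_right _ _) (by norm_num)⟩⟩, ?_⟩
    intro v hv
    have hv0 : (0:ℝ) < (v:ℝ) := v.2.1
    have hdist : dist (v:ℝ) 0 < ε := by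
      rw [Real.dist_eq, sub_zero, abs_of_pos hv0]
      have h1 : (v:ℝ) < min (ε/2) (1/2) := hv
      have h2 : min (ε/2) (1/2) ≤ ε/2 := min_le_left _ _
      linarith
    exact hball hdist v.2 v rfl
  have anchor1 : ∀ n : ℕ, (n:ℕ∞) < ∑ j, f (spec1 j) →
      ∃ t : ↥(Set.Ioo (0:ℝ) 1), ∀ v : ↥(Set.Ioo (0:ℝ) 1), (t:ℝ) < (v:ℝ) →
        (n:ℕ∞) < f (specMid v) := by
    intro n hn
    have hlt := lt_of_lt_of_le hn h1
    have hev := Filter.eventually_lt_of_lt_liminf hlt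
    rw [Filter.eventually_comap] at hev
    rw [eventually_nhdsWithin_iff] at hev
    rw [Metric.eventually_nhds_iff] at hev
    obtain ⟨ε, hε, hball⟩ := hev
    refine ⟨⟨max (1 - ε/2) (1/2), ⟨lt_of_lt_of_le (by norm_num) (le_max_right _ _),
      max_lt (by linarith) (by norm_num)⟩⟩, ?_⟩
    intro v hv
    have hv1 : (v:ℝ) < 1 := v.2.2
    have hdist : dist (v:ℝ) 1 < ε := by
      rw [Real.dist_eq, abs_of_neg (by linarith : (v:ℝ) - 1 < 0)]
      have h1' : max (1 - ε/2) (1/2) < (v:ℝ) := hv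
      have h2 : 1 - ε/2 ≤ max (1 - ε/2) (1/2) := le_max_left _ _
      linarith
    exact hball hdist v.2 v rfl
  have hmem0 : ∀ (n : ℕ) (i : Fin r),
      spec0 i ∈ (((t0 n).elim ∅ (fun i => {spec0 i}) : Set (SpecPoint r s)) ∪
        specMid '' U n ∪ (t1 n).elim ∅ (fun j => {spec1 j})) ↔ t0 n = some i := by
    intro n i
    cases hk : t0 n with
    | none =>
        cases hk1 : t1 n with
        | none => simp
        | some j => simp
    | some i' =>
        cases hk1 : t1 n with
        | none => simp [eq_comm]
        | some j => simp [eq_comm]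
  have hmem1 : ∀ (n : ℕ) (j : Fin s),
      spec1 j ∈ (((t0 n).elim ∅ (fun i => {spec0 i}) : Set (SpecPoint r s)) ∪
        specMid '' U n ∪ (t1 n).elim ∅ (fun j => {spec1 j})) ↔ t1 n = some j := by
    intro n j
    cases hk : t0 n with
    | none =>
        cases hk1 : t1 n with
        | none => simp
        | some j' => simp [eq_comm]
    | some i' =>
        cases hk1 : t1 n with
        | none => simp
        | some j' => simp [eq_comm]
  have hmemMid : ∀ (n : ℕ) (v : ↥(Set.Ioo (0:ℝ) 1)),
      specMid v ∈ (((t0 n).elim ∅ (fun i => {spec0 i}) : Set (SpecPoint r s)) ∪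
        specMid '' U n ∪ (t1 n).elim ∅ (fun j => {spec1 j})) ↔ (n:ℕ∞) < f (specMid v) := by
    intro n v
    have : v ∈ U n ↔ (n:ℕ∞) < f (specMid v) := Iff.rfl
    cases hk : t0 n with
    | none =>
        cases hk1 : t1 n with
        | none => simpa using this
        | some j' => simpa using this
    | some i' =>
        cases hk1 : t1 n with
        | none => simpa using this
        | some j' => simpa using this
  refine ⟨U, t0, t1, ?_, ?_, ht0card, ht1card, ?_⟩
  · intro n v hv
    have : ((n:ℕ)+1 : ℕ∞) = ((n+1 : ℕ) : ℕ∞) := by push_cast; ring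
    refine lt_of_le_of_lt ?_ (show ((n+1:ℕ):ℕ∞) < f (specMid v) from hv)
    exact_mod_cast Nat.le_succ n
  · intro n
    show TopologicalSpace.GenerateOpen (specGens r s)
      (((t0 n).elim ∅ (fun i => {spec0 i}) : Set (SpecPoint r s)) ∪
        specMid '' U n ∪ (t1 n).elim ∅ (fun j => {spec1 j}))
    set V : Set (SpecPoint r s) := ((t0 n).elim ∅ (fun i => {spec0 i}) : Set (SpecPoint r s)) ∪
        specMid '' U n ∪ (t1 n).elim ∅ (fun j => {spec1 j}) with hV
    have hWopen : TopologicalSpace.GenerateOpen (specGens r s) {y | (n:ℕ∞) < f y} := hlsc n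
    have key : ∀ y ∈ V, ∃ O, TopologicalSpace.GenerateOpen (specGens r s) O ∧ y ∈ O ∧ O ⊆ V := by
      rintro y hy
      rcases y with i | v | j
      · -- zero-point
        have hti : t0 n = some i := (hmem0 n i).1 hy
        have hn : (n:ℕ∞) < ∑ i, f (spec0 i) := ht0lt n i hti
        obtain ⟨t, ht⟩ := anchor0 n hn
        refine ⟨{spec0 i} ∪ specMid '' {v : ↥(Set.Ioo (0:ℝ) 1) | (v:ℝ) < (t:ℝ)},
          TopologicalSpace.GenerateOpen.basic _ (gen0_mem t i), Or.inl rfl, ?_⟩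
        rintro y (hy' | ⟨w, hw, rfl⟩)
        · rw [Set.mem_singleton_iff] at hy'
          rw [hy']
          exact hy
        · exact Or.inl (Or.inr ⟨w, ht w hw, rfl⟩)
      · -- mid point
        have hv : (n:ℕ∞) < f (specMid v) := (hmemMid n v).1 hy
        rcases aux_nbhd hWopen v hv with ⟨a, b, hav, hvb, ho, hsub⟩ | ⟨b, i, hvb, hsub⟩ |
          ⟨a, j, hav, hsub⟩ | hsub
        · refine ⟨_, ho, ⟨v, ⟨hav, hvb⟩, rfl⟩, ?_⟩
          rintro y ⟨w, hw, rfl⟩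
          exact Or.inl (Or.inr ⟨w, hsub ⟨w, hw, rfl⟩, rfl⟩)
        · have h0i : (n:ℕ∞) < f (spec0 i) := hsub (Or.inl rfl)
          have hnS : (n:ℕ∞) < ∑ i, f (spec0 i) :=
            lt_of_lt_of_le h0i (Finset.single_le_sum (f := fun i => f (spec0 i))
              (fun i _ => zero_le) (Finset.mem_univ i))
          obtain ⟨i'', hk⟩ := Option.ne_none_iff_exists'.mp (ht0full n hnS)
          have hb0 : (0:ℝ) < b := lt_trans v.2.1 hvb
          by_cases hii : i'' = i
          · subst hii
            refine ⟨{spec0 i''} ∪ specMid '' {w : ↥(Set.Ioo (0:ℝ) 1) | (w:ℝ) < b},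
              open_zeroSet i'' b hb0, Or.inr ⟨v, hvb, rfl⟩, ?_⟩
            rintro y (hy' | ⟨w, hw, rfl⟩)
            · rw [Set.mem_singleton_iff] at hy'
              rw [hy']
              exact (hmem0 n i'').2 hk
            · exact Or.inl (Or.inr ⟨w, hsub (Or.inr ⟨w, hw, rfl⟩), rfl⟩)
          · refine ⟨specMid '' {w : ↥(Set.Ioo (0:ℝ) 1) | (0:ℝ) < (w:ℝ) ∧ (w:ℝ) < min b b}, ?_,
              ⟨v, ⟨v.2.1, lt_min hvb hvb⟩, rfl⟩, ?_⟩
            · rw [← heq_zz i i'' (fun h => hii h.symm) b b]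
              exact TopologicalSpace.GenerateOpen.inter _ _ (open_zeroSet i b hb0)
                (open_zeroSet i'' b hb0)
            · rintro y ⟨w, hw, rfl⟩
              have hwb : (w:ℝ) < b := lt_of_lt_of_le hw.2 (min_le_left _ _)
              exact Or.inl (Or.inr ⟨w, hsub (Or.inr ⟨w, hwb, rfl⟩), rfl⟩)
        · have h1j : (n:ℕ∞) < f (spec1 j) := hsub (Or.inl rfl)
          have hnS : (n:ℕ∞) < ∑ j, f (spec1 j) :=
            lt_of_lt_of_le h1j (Finset.single_le_sum (f := fun j => f (spec1 j))
              (fun j _ => zero_le) (Finset.mem_univ j))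
          obtain ⟨j'', hk⟩ := Option.ne_none_iff_exists'.mp (ht1full n hnS)
          have ha1 : a < 1 := lt_trans hav v.2.2
          by_cases hjj : j'' = j
          · subst hjj
            refine ⟨{spec1 j''} ∪ specMid '' {w : ↥(Set.Ioo (0:ℝ) 1) | a < (w:ℝ)},
              open_oneSet j'' a ha1, Or.inr ⟨v, hav, rfl⟩, ?_⟩
            rintro y (hy' | ⟨w, hw, rfl⟩)
            · rw [Set.mem_singleton_iff] at hy'
              rw [hy']
              exact (hmem1 n j'').2 hk
            · exact Or.inl (Or.inr ⟨w, hsub (Or.inr ⟨w, hw, rfl⟩), rfl⟩)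
          · refine ⟨specMid '' {w : ↥(Set.Ioo (0:ℝ) 1) | max a a < (w:ℝ) ∧ (w:ℝ) < 1}, ?_,
              ⟨v, ⟨by simpa using hav, v.2.2⟩, rfl⟩, ?_⟩
            · rw [← heq_oo j j'' (fun h => hjj h.symm) a a]
              exact TopologicalSpace.GenerateOpen.inter _ _ (open_oneSet j a ha1)
                (open_oneSet j'' a ha1)
            · rintro y ⟨w, hw, rfl⟩
              have hwa : a < (w:ℝ) := lt_of_le_of_lt (le_max_left _ _) hw.1
              exact Or.inl (Or.inr ⟨w, hsub (Or.inr ⟨w, hwa, rfl⟩), rfl⟩)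
        · have hWuniv : ∀ y, (n:ℕ∞) < f y := fun y => hsub (Set.mem_univ y)
          rcases Nat.eq_zero_or_pos r with hr | hr
          · rcases Nat.eq_zero_or_pos s with hs | hs
            · refine ⟨Set.univ, TopologicalSpace.GenerateOpen.univ, Set.mem_univ _, ?_⟩
              rintro y -
              rcases y with i | w | j
              · exact absurd i.isLt (by omega)
              · exact Or.inl (Or.inr ⟨w, hWuniv (specMid w), rfl⟩)
              · exact absurd j.isLt (by omega)
            · have hnS : (n:ℕ∞) < ∑ j, f (spec1 j) :=
                lt_of_lt_of_le (hWuniv (spec1 ⟨0, hs⟩))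
                  (Finset.single_le_sum (f := fun j => f (spec1 j))
                    (fun j _ => zero_le) (Finset.mem_univ (⟨0, hs⟩ : Fin s)))
              obtain ⟨j'', hk⟩ := Option.ne_none_iff_exists'.mp (ht1full n hnS)
              refine ⟨{spec1 j''} ∪ specMid '' {w : ↥(Set.Ioo (0:ℝ) 1) | (0:ℝ) < (w:ℝ)},
                open_oneSet j'' 0 one_pos, ?_, ?_⟩
              case _ => exact Or.inr ⟨v, v.2.1, rfl⟩
              rintro y (hy' | ⟨w, hw, rfl⟩)
              · rw [Set.mem_singleton_iff] at hy'
                rw [hy']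
                exact (hmem1 n j'').2 hk
              · exact Or.inl (Or.inr ⟨w, hWuniv (specMid w), rfl⟩)
          · have hnS : (n:ℕ∞) < ∑ i, f (spec0 i) :=
              lt_of_lt_of_le (hWuniv (spec0 ⟨0, hr⟩))
                (Finset.single_le_sum (f := fun i => f (spec0 i))
                  (fun i _ => zero_le) (Finset.mem_univ (⟨0, hr⟩ : Fin r)))
            obtain ⟨i'', hk⟩ := Option.ne_none_iff_exists'.mp (ht0full n hnS)
            refine ⟨{spec0 i''} ∪ specMid '' {w : ↥(Set.Ioo (0:ℝ) 1) | (w:ℝ) < 1},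
              open_zeroSet i'' 1 one_pos, ?_, ?_⟩
            case _ => exact Or.inr ⟨v, v.2.2, rfl⟩
            rintro y (hy' | ⟨w, hw, rfl⟩)
            · rw [Set.mem_singleton_iff] at hy'
              rw [hy']
              exact (hmem0 n i'').2 hk
            · exact Or.inl (Or.inr ⟨w, hWuniv (specMid w), rfl⟩)
      · -- one-point
        have htj : t1 n = some j := (hmem1 n j).1 hy
        have hn : (n:ℕ∞) < ∑ j, f (spec1 j) := ht1lt n j htj
        obtain ⟨t, ht⟩ := anchor1 n hn
        refine ⟨{spec1 j} ∪ specMid '' {v : ↥(Set.Ioo (0:ℝ) 1) | (t:ℝ) < (v:ℝ)},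
          TopologicalSpace.GenerateOpen.basic _ (gen1_mem t j), Or.inl rfl, ?_⟩
        rintro y (hy' | ⟨w, hw, rfl⟩)
        · rw [Set.mem_singleton_iff] at hy'
          rw [hy']
          exact hy
        · exact Or.inl (Or.inr ⟨w, ht w hw, rfl⟩)
    have hVeq : V = ⋃₀ {O | TopologicalSpace.GenerateOpen (specGens r s) O ∧ O ⊆ V} := by
      apply Set.Subset.antisymm
      · intro y hy
        obtain ⟨O, hO1, hO2, hO3⟩ := key y hy
        exact ⟨O, ⟨hO1, hO3⟩, hO2⟩
      · exact Set.sUnion_subset (fun O hO => hO.2)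
    rw [hVeq]
    exact TopologicalSpace.GenerateOpen.sUnion _ (fun O hO => hO.1)
  · intro y
    have hind : ∀ (n : ℕ) (y : SpecPoint r s),
        (((t0 n).elim ∅ (fun i => {spec0 i}) : Set (SpecPoint r s)) ∪
          specMid '' U n ∪ (t1 n).elim ∅ (fun j => {spec1 j})).indicator 1 y
        = if y ∈ (((t0 n).elim ∅ (fun i => {spec0 i}) : Set (SpecPoint r s)) ∪
          specMid '' U n ∪ (t1 n).elim ∅ (fun j => {spec1 j})) then (1:ℕ∞) else 0 :=
      fun n y => Set.indicator_apply _ _ _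
    rcases y with i | v | j
    · calc f (spec0 i) = {n | t0 n = some i}.encard := (ht0card i).symm
        _ = ⨆ N : ℕ, ∑ n ∈ Finset.range N, (if t0 n = some i then (1:ℕ∞) else 0) :=
            (aux_count_sup _).symm
        _ = _ := by
            apply iSup_congr
            intro N
            apply Finset.sum_congr rfl
            intro n _
            rw [hind n (Sum.inl i)]
            exact (if_congr (hmem0 n i) rfl rfl).symm
    · calc f (specMid v) = {n : ℕ | (n:ℕ∞) < f (specMid v)}.encard := (aux_encard_lt _).symm
        _ = ⨆ N : ℕ, ∑ n ∈ Finset.range N, (if (n:ℕ∞) < f (specMid v) then (1:ℕ∞) else 0) :=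
            (aux_count_sup _).symm
        _ = _ := by
            apply iSup_congr
            intro N
            apply Finset.sum_congr rfl
            intro n _
            rw [hind n (Sum.inr (Sum.inl v))]
            exact (if_congr (hmemMid n v) rfl rfl).symm
    · calc f (spec1 j) = {n | t1 n = some j}.encard := (ht1card j).symm
        _ = ⨆ N : ℕ, ∑ n ∈ Finset.range N, (if t1 n = some j then (1:ℕ∞) else 0) :=
            (aux_count_sup _).symm
        _ = _ := by
            apply iSup_congr
            intro N
            apply Finset.sum_congr rfl
            intro n _
            rw [hind n (Sum.inr (Sum.inr j))]
            exact (if_congr (hmem1 n j) rfl rfl).symm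
end
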